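/- arXiv:0805.4412 — 3 statements merged into one kernel-verified Lean document; each statement's English description precedes it below -/
import Mathlib

section
/- Let B be a compact Hausdorff topological space, F a compact Hausdorff topological space, and proj : Z → B a (topological) fiber bundle with fiber F whose total space Z is Hausdorff. Suppose there exists a topological embedding e : F → ℝ^k for some k. Then there exist m ∈ ℕ and a closed topological embedding j : Z → B × ℝ^m such that Prod.fst ∘ j = proj; in particular j is fiber-preserving and restricts to a topological embedding of each fiber proj⁻¹(b) into {b} × ℝ^m. -/
/-!
The total space is compact: it is covered by finitely many preimages of compact subsets of
trivializing base sets, each homeomorphic to a compact set times `F`. Choose a finite trivializing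
cover `φ i` and a subordinate partition of unity `ρ i`; then
`z ↦ (proj z, (ρ i (proj z) • e (φ i z).2)ᵢ)` is continuous, and injective because over `b` any
`i` with `ρ i b > 0` recovers `z` from `(φ i z).2`. A continuous injection of a compact space into
a Hausdorff one is a closed embedding.
-/

open Bundle Topology Set

namespace Bundle.Trivialization

variable {B F Z : Type*} [TopologicalSpace B] [TopologicalSpace F] [TopologicalSpace Z]
  {proj : Z → B}

theorem isCompact_preimage [CompactSpace F] (φ : Trivialization F proj) {K : Set B}
    (hK : IsCompact K) (hKφ : K ⊆ φ.baseSet) : IsCompact (proj ⁻¹' K) := by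
  have : CompactSpace K := isCompact_iff_compactSpace.1 hK
  exact isCompact_iff_compactSpace.2 (φ.preimageHomeomorph hKφ).symm.compactSpace

theorem eq_of_proj_eq_of_snd_eq (φ : Trivialization F proj) {z z' : Z}
    (hz : proj z ∈ φ.baseSet) (hproj : proj z = proj z') (hsnd : (φ z).2 = (φ z').2) :
    z = z' := by
  have hz' : proj z' ∈ φ.baseSet := hproj ▸ hz
  have hfst : (φ z).1 = (φ z').1 := by rw [φ.coe_fst' hz, φ.coe_fst' hz', hproj]
  exact φ.toOpenPartialHomeomorph.injOn (φ.mem_source.2 hz) (φ.mem_source.2 hz')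
    (Prod.ext hfst hsnd)

end Bundle.Trivialization

theorem FiberBundle.compactSpace_totalSpace {B F : Type*} [TopologicalSpace B] [CompactSpace B]
    [LocallyCompactSpace B] [TopologicalSpace F] [CompactSpace F] (E : B → Type*)
    [TopologicalSpace (TotalSpace F E)] [∀ b, TopologicalSpace (E b)] [FiberBundle F E] :
    CompactSpace (TotalSpace F E) := by
  choose K hK_nhds hK_sub hK_compact using fun b : B =>
    local_compact_nhds ((trivializationAt F E b).open_baseSet.mem_nhds
      (mem_baseSet_trivializationAt F E b))
  obtain ⟨t, -, ht⟩ := isCompact_univ.elim_nhds_subcover K fun b _ => hK_nhds b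
  refine ⟨(t.isCompact_biUnion fun b _ =>
    (trivializationAt F E b).isCompact_preimage (hK_compact b) (hK_sub b)).of_isClosed_subset
      isClosed_univ fun z _ => ?_⟩
  simpa only [mem_iUnion₂, mem_preimage] using ht (mem_univ z.proj)

namespace PartitionOfUnity

variable {ι B F Z V : Type*} [TopologicalSpace B] [TopologicalSpace F] [TopologicalSpace Z]
  [AddCommGroup V] [Module ℝ V] {proj : Z → B}
  (ρ : PartitionOfUnity ι B) (φ : ι → Trivialization F proj) (u : F → V)

def fiberCoords (z : Z) (i : ι) : V :=
  ρ i (proj z) • u (φ i z).2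

variable {ρ φ u}

theorem continuous_fiberCoords [TopologicalSpace V] [ContinuousSMul ℝ V]
    (hρ : ρ.IsSubordinate fun i => (φ i).baseSet) (hproj : Continuous proj)
    (hu : Continuous u) : Continuous (ρ.fiberCoords φ u) := by
  refine continuous_pi fun i => ?_
  have hcont : ContinuousOn (fun z => ρ.fiberCoords φ u z i) (φ i).source :=
    ((ρ i).continuous.comp hproj).continuousOn.smul
      (hu.comp_continuousOn
        (continuous_snd.comp_continuousOn (φ i).toOpenPartialHomeomorph.continuousOn))
  refine hcont.continuous_of_tsupport_subset (φ i).open_source ?_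
  calc tsupport (fun z => ρ.fiberCoords φ u z i)
      ⊆ tsupport (fun z => ρ i (proj z)) := tsupport_smul_subset_left _ _
    _ ⊆ proj ⁻¹' tsupport (ρ i) := tsupport_comp_subset_preimage _ hproj
    _ ⊆ (φ i).source := (φ i).preimage_subset_source (hρ i)

theorem injective_proj_prodMk_fiberCoords [NoZeroSMulDivisors ℝ V]
    (hρ : ρ.IsSubordinate fun i => (φ i).baseSet) (hu : Function.Injective u) :
    Function.Injective fun z => (proj z, ρ.fiberCoords φ u z) := by
  intro z z' hzz'
  obtain ⟨hproj, hcoords⟩ := Prod.mk.inj hzz'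
  obtain ⟨i, hi⟩ := ρ.exists_pos (mem_univ (proj z))
  have hsmul : ρ i (proj z) • u (φ i z).2 = ρ i (proj z) • u (φ i z').2 := by
    simpa only [fiberCoords, hproj] using congrFun hcoords i
  exact (φ i).eq_of_proj_eq_of_snd_eq (hρ i (subset_tsupport _ hi.ne')) hproj
    (hu (smul_right_injective V hi.ne' hsmul))

end PartitionOfUnity

theorem stmt3_general (B F : Type*) [TopologicalSpace B] [CompactSpace B] [T2Space B]
    [TopologicalSpace F] [CompactSpace F]
    (E : B → Type*) [TopologicalSpace (TotalSpace F E)] [∀ b, TopologicalSpace (E b)]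
    [FiberBundle F E]
    (k : ℕ) (e : F → EuclideanSpace ℝ (Fin k)) (he : IsEmbedding e) :
    ∃ (m : ℕ) (j : TotalSpace F E → B × EuclideanSpace ℝ (Fin m)),
      IsClosedEmbedding j ∧ Prod.fst ∘ j = TotalSpace.proj := by
  obtain ⟨t, ht⟩ := isCompact_univ.elim_finite_subcover
    (fun b => (trivializationAt F E b).baseSet) (fun b => (trivializationAt F E b).open_baseSet)
    fun b _ => mem_iUnion.2 ⟨b, mem_baseSet_trivializationAt F E b⟩
  let φ : t → Trivialization F (TotalSpace.proj : TotalSpace F E → B) :=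
    fun b => trivializationAt F E b
  obtain ⟨ρ, hρ⟩ := PartitionOfUnity.exists_isSubordinate isClosed_univ
    (fun b => (φ b).baseSet) (fun b => (φ b).open_baseSet) (by simpa [iUnion_subtype] using ht)
  have := FiberBundle.compactSpace_totalSpace (F := F) E
  have hproj := FiberBundle.continuous_proj F E
  refine ⟨_, fun z => (z.proj, toEuclidean (ρ.fiberCoords φ e z)), ?_, rfl⟩
  refine Continuous.isClosedEmbedding
    (hproj.prodMk (toEuclidean.continuous.comp (ρ.continuous_fiberCoords hρ hproj he.continuous)))
    fun z z' h => ρ.injective_proj_prodMk_fiberCoords hρ he.injective ?_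
  simpa using h

/-- A fiber bundle over a compact Hausdorff base, with compact Hausdorff fiber
embeddable in some `ℝ^k` and Hausdorff total space, admits a fiberwise closed
embedding into a trivial bundle `B × ℝ^m` over the base. -/
theorem stmt3 (B F : Type*) [TopologicalSpace B] [CompactSpace B] [T2Space B]
    [TopologicalSpace F] [CompactSpace F] [T2Space F]
    (E : B → Type*) [TopologicalSpace (TotalSpace F E)] [∀ b, TopologicalSpace (E b)]
    [FiberBundle F E] [T2Space (TotalSpace F E)]
    (k : ℕ) (e : F → EuclideanSpace ℝ (Fin k)) (he : IsEmbedding e) :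
    ∃ (m : ℕ) (j : TotalSpace F E → B × EuclideanSpace ℝ (Fin m)),
      IsClosedEmbedding j ∧ Prod.fst ∘ j = TotalSpace.proj :=
  stmt3_general B F E k e he
end

section
/- Let X be a compact smooth manifold with boundary (a manifold modelled on a model with corners I over ℝⁿ, with boundary ∂X = I.boundary X). Let i : X → ℝ^m be a smooth map that is injective and whose differential mfderiv I at every point of X is injective, and let α : X → ℝ be a smooth function with α(x) ≥ 0 for all x ∈ X and α⁻¹({0}) = ∂X. Then the map h : X → ℝ^m × ℝ, h(x) = (i(x), α(x)), satisfies: (i) h is injective and a topological embedding; (ii) the differential of h at every point of X is injective; (iii) h(X) ⊆ ℝ^m × [0,∞); (iv) h⁻¹(ℝ^m × {0}) = ∂X; and (v) h restricts to a topological embedding of ∂X into ℝ^m × {0} that is smooth with everywhere injective differential. -/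
open Topology
open scoped Manifold

/-! Since `i = Prod.fst ∘ h`, injectivity of `i` and of its differential pass to `h = (i, α)`;
being a continuous injection of a compact space into a Hausdorff one, `h` is an embedding.
The statements about the half-space and `ℝ^m × {0}` are `α ≥ 0` and `α⁻¹(0) = ∂X`. -/

section
variable {𝕜 : Type*} [NontriviallyNormedField 𝕜]
  {E : Type*} [NormedAddCommGroup E] [NormedSpace 𝕜 E] {H : Type*} [TopologicalSpace H]
  {I : ModelWithCorners 𝕜 E H} {M : Type*} [TopologicalSpace M] [ChartedSpace H M]
  {E' : Type*} [NormedAddCommGroup E'] [NormedSpace 𝕜 E'] {H' : Type*} [TopologicalSpace H']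
  {I' : ModelWithCorners 𝕜 E' H'} {M' : Type*} [TopologicalSpace M'] [ChartedSpace H' M']
  {E'' : Type*} [NormedAddCommGroup E''] [NormedSpace 𝕜 E''] {H'' : Type*} [TopologicalSpace H'']
  {I'' : ModelWithCorners 𝕜 E'' H''} {M'' : Type*} [TopologicalSpace M''] [ChartedSpace H'' M'']

theorem injective_mfderiv_of_injective_mfderiv_comp {f : M → M'} {g : M' → M''} {x : M}
    (hg : MDifferentiableAt I' I'' g (f x)) (hf : MDifferentiableAt I I' f x)
    (hgf : Function.Injective (mfderiv I I'' (g ∘ f) x)) :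
    Function.Injective (mfderiv I I' f x) := by
  rw [mfderiv_comp x hg hf, ContinuousLinearMap.coe_comp] at hgf
  exact hgf.of_comp

end

theorem stmt5_general {n : ℕ} {H : Type*} [TopologicalSpace H]
    (I : ModelWithCorners ℝ (EuclideanSpace ℝ (Fin n)) H)
    {X : Type*} [TopologicalSpace X] [ChartedSpace H X]
    [CompactSpace X]
    {m : ℕ} (i : X → EuclideanSpace ℝ (Fin m))
    (hi : ContMDiff I 𝓘(ℝ, EuclideanSpace ℝ (Fin m)) (⊤ : ℕ∞) i)
    (hiinj : Function.Injective i)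
    (hdi : ∀ x : X, Function.Injective (mfderiv I 𝓘(ℝ, EuclideanSpace ℝ (Fin m)) i x))
    (α : X → ℝ) (hα : ContMDiff I 𝓘(ℝ, ℝ) (⊤ : ℕ∞) α)
    (hα0 : ∀ x, 0 ≤ α x) (hαb : α ⁻¹' {0} = I.boundary X) :
    Function.Injective (fun x : X => (i x, α x)) ∧
    IsEmbedding (fun x : X => (i x, α x)) ∧
    (∀ x : X, Function.Injective
      (mfderiv I 𝓘(ℝ, EuclideanSpace ℝ (Fin m) × ℝ) (fun x : X => (i x, α x)) x)) ∧
    (∀ x : X, 0 ≤ ((i x, α x) : EuclideanSpace ℝ (Fin m) × ℝ).2) ∧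
    ((fun x : X => (i x, α x)) ⁻¹' {p : EuclideanSpace ℝ (Fin m) × ℝ | p.2 = 0}
      = I.boundary X) ∧
    IsEmbedding ((I.boundary X).restrict fun x : X => (i x, α x)) ∧
    (∀ x ∈ I.boundary X, α x = 0) ∧
    ContMDiffOn I 𝓘(ℝ, EuclideanSpace ℝ (Fin m) × ℝ) (⊤ : ℕ∞) (fun x : X => (i x, α x))
      (I.boundary X) ∧
    (∀ x ∈ I.boundary X, Function.Injective
      (mfderiv I 𝓘(ℝ, EuclideanSpace ℝ (Fin m) × ℝ) (fun x : X => (i x, α x)) x)) := by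
  have hh := hi.prodMk_space hα
  have hinj : Function.Injective (fun x : X => (i x, α x)) :=
    Function.Injective.of_comp (f := Prod.fst) hiinj
  have hemb : IsEmbedding (fun x : X => (i x, α x)) :=
    (hh.continuous.isClosedEmbedding hinj).isEmbedding
  have hd (x : X) : Function.Injective
      (mfderiv I 𝓘(ℝ, EuclideanSpace ℝ (Fin m) × ℝ) (fun x : X => (i x, α x)) x) :=
    injective_mfderiv_of_injective_mfderiv_comp (g := Prod.fst)
      differentiableAt_fst.mdifferentiableAt (hh.mdifferentiable (by simp) x) (hdi x)
  exact ⟨hinj, hemb, hd, hα0, hαb, hemb.comp .subtypeVal, fun x hx ↦ hαb.ge hx,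
    hh.contMDiffOn, fun x _ ↦ hd x⟩

/-- Fiberwise content of Proposition 4.2: if `i : X → ℝ^m` is a smooth injective
map with everywhere injective differential on a compact manifold with boundary `X`,
and `α : X → ℝ` is a smooth nonnegative boundary defining function
(`α⁻¹(0) = ∂X`), then `h = (i, α) : X → ℝ^m × ℝ` is a neat embedding:
it is an injective topological embedding with everywhere injective differential,
its image lies in the half-space `ℝ^m × [0,∞)`, it pulls `ℝ^m × {0}` back to
`∂X`, and it restricts on `∂X` to a topological embedding into `ℝ^m × {0}` which
is smooth with everywhere injective differential. -/
theorem stmt5 {n : ℕ} {H : Type*} [TopologicalSpace H]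
    (I : ModelWithCorners ℝ (EuclideanSpace ℝ (Fin n)) H)
    {X : Type*} [TopologicalSpace X] [T2Space X] [ChartedSpace H X]
    [IsManifold I (⊤ : ℕ∞) X] [CompactSpace X]
    {m : ℕ} (i : X → EuclideanSpace ℝ (Fin m))
    (hi : ContMDiff I 𝓘(ℝ, EuclideanSpace ℝ (Fin m)) (⊤ : ℕ∞) i)
    (hiinj : Function.Injective i)
    (hdi : ∀ x : X, Function.Injective (mfderiv I 𝓘(ℝ, EuclideanSpace ℝ (Fin m)) i x))
    (α : X → ℝ) (hα : ContMDiff I 𝓘(ℝ, ℝ) (⊤ : ℕ∞) α)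
    (hα0 : ∀ x, 0 ≤ α x) (hαb : α ⁻¹' {0} = I.boundary X) :
    Function.Injective (fun x : X => (i x, α x)) ∧
    IsEmbedding (fun x : X => (i x, α x)) ∧
    (∀ x : X, Function.Injective
      (mfderiv I 𝓘(ℝ, EuclideanSpace ℝ (Fin m) × ℝ) (fun x : X => (i x, α x)) x)) ∧
    (∀ x : X, 0 ≤ ((i x, α x) : EuclideanSpace ℝ (Fin m) × ℝ).2) ∧
    ((fun x : X => (i x, α x)) ⁻¹' {p : EuclideanSpace ℝ (Fin m) × ℝ | p.2 = 0}
      = I.boundary X) ∧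
    IsEmbedding ((I.boundary X).restrict fun x : X => (i x, α x)) ∧
    (∀ x ∈ I.boundary X, α x = 0) ∧
    ContMDiffOn I 𝓘(ℝ, EuclideanSpace ℝ (Fin m) × ℝ) (⊤ : ℕ∞) (fun x : X => (i x, α x))
      (I.boundary X) ∧
    (∀ x ∈ I.boundary X, Function.Injective
      (mfderiv I 𝓘(ℝ, EuclideanSpace ℝ (Fin m) × ℝ) (fun x : X => (i x, α x)) x)) :=
  stmt5_general I i hi hiinj hdi α hα hα0 hαb
end

section
/- Let X be a compact smooth manifold with boundary (a manifold modelled on a model with corners I over ℝⁿ, with boundary ∂X = I.boundary X). Then there exists a smooth function α : X → ℝ with 0 ≤ α(x) ≤ 1 for all x ∈ X and α⁻¹({0}) = ∂X; in particular α is strictly positive exactly on the interior of X. -/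
open scoped Manifold ContDiff
open Set Function

theorem exists_contMDiff_support_eq_interior {E : Type*} [NormedAddCommGroup E]
    [NormedSpace ℝ E] [FiniteDimensional ℝ E] {H : Type*} [TopologicalSpace H]
    (I : ModelWithCorners ℝ E H) {M : Type*} [TopologicalSpace M] [ChartedSpace H M]
    [T2Space M] [SigmaCompactSpace M] [IsManifold I ∞ M] {n : ℕ∞} :
    ∃ f : M → ℝ, ContMDiff I 𝓘(ℝ) n f ∧ range f ⊆ Icc 0 1 ∧ support f = I.interior M := by
  obtain ⟨f, hf, hrange, hsupp, -⟩ := exists_contMDiff_support_eq_eq_one_iff I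
    (I.isOpen_interior (M := M) (n := ∞) (by simp)) isClosed_empty (empty_subset _)
  exact ⟨f, hf, hrange, hsupp⟩

/-- On a compact smooth manifold with boundary there is a smooth function
`α : X → ℝ` with values in `[0,1]` whose zero set is exactly the boundary;
in particular `α` is strictly positive exactly on the interior. -/
theorem stmt6 {n : ℕ} {H : Type*} [TopologicalSpace H]
    (I : ModelWithCorners ℝ (EuclideanSpace ℝ (Fin n)) H)
    (X : Type*) [TopologicalSpace X] [T2Space X] [ChartedSpace H X]
    [IsManifold I (⊤ : ℕ∞) X] [CompactSpace X] :
    ∃ α : X → ℝ, ContMDiff I 𝓘(ℝ, ℝ) (⊤ : ℕ∞) α ∧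
      (∀ x, α x ∈ Set.Icc (0:ℝ) 1) ∧
      α ⁻¹' {0} = I.boundary X ∧
      ∀ x, 0 < α x ↔ x ∈ I.interior X := by
  obtain ⟨α, hα, hrange, hsupp⟩ := exists_contMDiff_support_eq_interior I (M := X) (n := ⊤)
  have hIcc (x : X) : α x ∈ Icc 0 1 := hrange (mem_range_self x)
  refine ⟨α, hα, hIcc, ?_, fun x ↦ ?_⟩
  · rw [← I.compl_interior, ← hsupp, compl_support]
    rfl
  · rw [← hsupp, mem_support, (hIcc x).1.lt_iff_ne']
end
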